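/- For all n ≥ 2, the Motzkin numbers satisfy the recurrence (n+2)·M_n = (2n+1)·M_{n-1} + 3(n-1)·M_{n-2}. -/

import Mathlib

inductive MStep where
  | U : MStep
  | D : MStep
  | H : MStep
deriving DecidableEq

/-- A word in {U,D,H} is a Motzkin path if #U = #D and no prefix has more D's than U's. -/
def IsMotzkin (w : List MStep) : Prop :=
  w.count MStep.U = w.count MStep.D ∧
  ∀ p : List MStep, p <+: w → p.count MStep.D ≤ p.count MStep.U

/-- Number of Motzkin paths of length n (the n-th Motzkin number). -/
noncomputable def motzkinNum (n : ℕ) : ℕ :=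
  Nat.card {w : List MStep // w.length = n ∧ IsMotzkin w}

/-- Number of Motzkin paths of length n with an even number of U steps. -/
noncomputable def evenMotzkin (n : ℕ) : ℕ :=
  Nat.card {w : List MStep // w.length = n ∧ IsMotzkin w ∧ Even (w.count MStep.U)}

/-- Number of Motzkin paths of length n with an odd number of U steps. -/
noncomputable def oddMotzkin (n : ℕ) : ℕ :=
  Nat.card {w : List MStep // w.length = n ∧ IsMotzkin w ∧ Odd (w.count MStep.U)}

/-- The shadow of the n-th Motzkin number: s(n) = a(n) - b(n). -/
noncomputable def shadow (n : ℕ) : ℤ :=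
  (evenMotzkin n : ℤ) - (oddMotzkin n : ℤ)

/-!
Splitting a Motzkin path at its first step and, if that step is `U`, at the matching `D`
(`H w` or `U w₁ D w₂`) shows that its generating function satisfies `M = 1 + X M + X² M²`.
Then `s = 1 - X - 2 X² M` is a square root of `1 - 2X - 3X²`, which makes `M` D-finite:
eliminating `M M'` from the derivative of the functional equation by means of `s` gives
`(1 - 2X - 3X²) X M' = 2 - (2 - 3X - 3X²) M`, and the coefficient of `Xⁿ⁺²` of this equation
is the recurrence.
-/

namespace List

variable {α : Type*}

theorem forall_prefix_cons_iff {P : List α → Prop} {a : α} {l : List α} :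
    (∀ p, p <+: a :: l → P p) ↔ P [] ∧ ∀ q, q <+: l → P (a :: q) := by
  simp only [prefix_cons_iff]
  refine ⟨fun h => ⟨h [] (.inl rfl), fun q hq => h _ (.inr ⟨q, rfl, hq⟩)⟩, ?_⟩
  rintro ⟨h₀, h⟩ p (rfl | ⟨q, rfl, hq⟩)
  exacts [h₀, h q hq]

theorem forall_prefix_append_iff {P : List α → Prop} {l₁ l₂ : List α} :
    (∀ p, p <+: l₁ ++ l₂ → P p) ↔ (∀ p, p <+: l₁ → P p) ∧ ∀ q, q <+: l₂ → P (l₁ ++ q) := by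
  refine ⟨fun h => ⟨fun p hp => h p (prefix_append_of_prefix hp),
    fun q hq => h _ ((prefix_append_right_inj l₁).2 hq)⟩, ?_⟩
  rintro ⟨h₁, h₂⟩ p hp
  rcases prefix_or_prefix_of_prefix hp (prefix_append l₁ l₂) with hp₁ | ⟨q, rfl⟩
  · exact h₁ p hp₁
  · exact h₂ q ((prefix_append_right_inj l₁).1 hp)

end List

open MStep

instance : Fintype MStep := ⟨{U, D, H}, fun x => by cases x <;> decide⟩

theorem isMotzkin_nil : IsMotzkin [] :=
  ⟨rfl, fun p hp => by simp [List.prefix_nil.mp hp]⟩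

theorem isMotzkin_cons_H_iff {t : List MStep} : IsMotzkin (H :: t) ↔ IsMotzkin t := by
  simp [IsMotzkin, List.forall_prefix_cons_iff]

theorem not_isMotzkin_cons_D (t : List MStep) : ¬ IsMotzkin (D :: t) := fun h => by
  simpa using h.2 [D] (by simp)

theorem IsMotzkin.cons_U_append_cons_D {w₁ w₂ : List MStep} (h₁ : IsMotzkin w₁)
    (h₂ : IsMotzkin w₂) : IsMotzkin (U :: w₁ ++ D :: w₂) := by
  obtain ⟨c₁, p₁⟩ := h₁
  obtain ⟨c₂, p₂⟩ := h₂
  refine ⟨by grind, ?_⟩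
  simp only [List.cons_append, List.forall_prefix_cons_iff, List.forall_prefix_append_iff]
  exact ⟨by simp, fun p hp => by grind [p₁ p hp], by grind, fun q hq => by grind [p₂ q hq]⟩

theorem exists_eq_append_cons_D :
    ∀ t : List MStep, t.count U < t.count D → ∃ w₁ w₂, t = w₁ ++ D :: w₂ ∧ IsMotzkin w₁
  | [], h => by simp at h
  | D :: t, _ => ⟨[], t, rfl, isMotzkin_nil⟩
  | H :: t, h => by
    obtain ⟨w₁, w₂, rfl, hw₁⟩ := exists_eq_append_cons_D t (by simpa using h)
    exact ⟨H :: w₁, w₂, rfl, isMotzkin_cons_H_iff.2 hw₁⟩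
  | U :: t, h => by
    obtain ⟨w₁, w₂, rfl, hw₁⟩ := exists_eq_append_cons_D t (by grind)
    obtain ⟨v₁, v₂, rfl, hv₁⟩ := exists_eq_append_cons_D w₂ (by grind [hw₁.1])
    exact ⟨U :: w₁ ++ D :: v₁, v₂, by simp, hw₁.cons_U_append_cons_D hv₁⟩
termination_by t => t.length
decreasing_by all_goals (simp_all <;> omega)

theorem IsMotzkin.exists_of_cons_U {t : List MStep} (h : IsMotzkin (U :: t)) :
    ∃ w₁ w₂, t = w₁ ++ D :: w₂ ∧ IsMotzkin w₁ ∧ IsMotzkin w₂ := by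
  obtain ⟨w₁, w₂, rfl, hw₁⟩ := exists_eq_append_cons_D t (by grind [h.1])
  refine ⟨w₁, w₂, rfl, hw₁, ?_, fun q hq => ?_⟩
  · grind [h.1, hw₁.1]
  · grind [hw₁.1, h.2 (U :: w₁ ++ D :: q) (by simpa using hq)]

theorem IsMotzkin.length_le_of_append_cons_D_eq {w₁ w₂ v₁ v₂ : List MStep} (hw : IsMotzkin w₁)
    (hv : IsMotzkin v₁) (h : w₁ ++ D :: w₂ = v₁ ++ D :: v₂) : v₁.length ≤ w₁.length := by
  by_contra! hlt
  have hpre : w₁ ++ [D] <+: v₁ := List.prefix_of_prefix_length_le (l₃ := v₁ ++ D :: v₂)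
    ⟨w₂, by simp [h]⟩ (List.prefix_append _ _) (by simpa)
  grind [hv.2 _ hpre, hw.1]

theorem IsMotzkin.append_cons_D_inj {w₁ w₂ v₁ v₂ : List MStep} (hw : IsMotzkin w₁)
    (hv : IsMotzkin v₁) (h : w₁ ++ D :: w₂ = v₁ ++ D :: v₂) : w₁ = v₁ ∧ w₂ = v₂ := by
  have hlen := (hw.length_le_of_append_cons_D_eq hv h).antisymm
    (hv.length_le_of_append_cons_D_eq hw h.symm)
  obtain ⟨rfl, h₂⟩ := List.append_inj h hlen.symm
  exact ⟨rfl, List.cons_injective h₂⟩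

abbrev MotzkinPath (n : ℕ) := {w : List MStep // w.length = n ∧ IsMotzkin w}

instance (n : ℕ) : Finite (MotzkinPath n) :=
  ((List.finite_length_eq MStep n).subset fun _ hw => hw.1).to_subtype

instance : Unique (MotzkinPath 0) where
  default := ⟨[], rfl, isMotzkin_nil⟩
  uniq w := Subtype.ext (List.eq_nil_of_length_eq_zero w.2.1)

namespace MotzkinPath

def glue (n : ℕ) :
    MotzkinPath n ⊕ (Σ k : Fin n, MotzkinPath k × MotzkinPath (n - 1 - k)) → MotzkinPath (n + 1)
  | .inl t => ⟨H :: t.1, by simp [t.2.1], isMotzkin_cons_H_iff.2 t.2.2⟩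
  | .inr ⟨k, w₁, w₂⟩ => ⟨U :: w₁.1 ++ D :: w₂.1, by grind [w₁.2.1, w₂.2.1, k.isLt],
      w₁.2.2.cons_U_append_cons_D w₂.2.2⟩

theorem glue_injective (n : ℕ) : Function.Injective (glue n) := by
  rintro (⟨t, ht⟩ | ⟨k, ⟨w₁, hw₁⟩, ⟨w₂, hw₂⟩⟩) (⟨t', ht'⟩ | ⟨k', ⟨v₁, hv₁⟩, ⟨v₂, hv₂⟩⟩) h <;>
    simp only [glue, Subtype.mk.injEq, List.cons_append, List.cons.injEq, reduceCtorEq,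
      true_and, false_and] at h
  · subst h
    rfl
  · obtain ⟨rfl, rfl⟩ := hw₁.2.append_cons_D_inj hv₁.2 h
    obtain rfl : k = k' := Fin.ext (hw₁.1.symm.trans hv₁.1)
    rfl

theorem glue_surjective (n : ℕ) : Function.Surjective (glue n) := by
  rintro ⟨_ | ⟨_ | _ | _, t⟩, hlen, hw⟩
  · simp at hlen
  · obtain ⟨w₁, w₂, rfl, hw₁, hw₂⟩ := hw.exists_of_cons_U
    simp only [List.length_cons, List.length_append] at hlen
    exact ⟨.inr ⟨⟨w₁.length, by omega⟩, ⟨w₁, rfl, hw₁⟩, ⟨w₂, by grind, hw₂⟩⟩, rfl⟩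
  · exact absurd hw (not_isMotzkin_cons_D t)
  · exact ⟨.inl ⟨t, by simpa using hlen, isMotzkin_cons_H_iff.1 hw⟩, rfl⟩

end MotzkinPath

theorem motzkinNum_zero : motzkinNum 0 = 1 := Nat.card_unique

theorem motzkinNum_succ (n : ℕ) : motzkinNum (n + 1) =
    motzkinNum n + ∑ k ∈ Finset.range n, motzkinNum k * motzkinNum (n - 1 - k) := by
  rw [motzkinNum, ← Nat.card_eq_of_bijective _
    ⟨MotzkinPath.glue_injective n, MotzkinPath.glue_surjective n⟩, Nat.card_sum, Nat.card_sigma]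
  simp only [Nat.card_prod]
  exact congrArg _ (Fin.sum_univ_eq_sum_range (fun k => motzkinNum k * motzkinNum (n - 1 - k)) n)

namespace PowerSeries

variable {R : Type*} [CommRing R]

theorem coeff_X_mul_derivative (f : R⟦X⟧) (n : ℕ) :
    coeff n (X * d⁄dX R f) = n * coeff n f := by
  cases n with
  | zero => simp
  | succ n => rw [coeff_succ_X_mul, coeff_derivative, mul_comm, Nat.cast_succ]

theorem X_mul_derivative_of_motzkin_eq {f : R⟦X⟧} (hf : f = 1 + X * f + X ^ 2 * f ^ 2) :
    (1 - 2 * X - 3 * X ^ 2) * (X * d⁄dX R f) = 2 - (2 - 3 * X - 3 * X ^ 2) * f := by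
  have hf' : d⁄dX R f = f + X * d⁄dX R f + 2 * X * f ^ 2 + 2 * X ^ 2 * f * d⁄dX R f := by
    conv_lhs => rw [hf]
    simp only [map_add, Derivation.leibniz, Derivation.leibniz_pow, derivative_X, smul_eq_mul,
      nsmul_eq_mul, Derivation.map_one_eq_zero]
    push_cast
    ring
  -- By `hf`, the factor `1 - X - 2 * X ^ 2 * f` below squares to `1 - 2 * X - 3 * X ^ 2`.
  linear_combination (2 + 4 * X ^ 2 * f + 4 * X ^ 3 * d⁄dX R f) * hf
    + X * (1 - X - 2 * X ^ 2 * f) * hf'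

theorem coeff_recurrence_of_motzkin_eq {f : R⟦X⟧} (hf : f = 1 + X * f + X ^ 2 * f ^ 2)
    (n : ℕ) : (n + 4 : R) * coeff (n + 2) f =
      (2 * n + 5) * coeff (n + 1) f + 3 * (n + 1) * coeff n f := by
  set g := X * d⁄dX R f
  have hg : ∀ m, coeff m g = m * coeff m f := coeff_X_mul_derivative f
  have h : g + C 2 * f = X * (C 2 * g + C 3 * f) + X ^ 2 * (C 3 * g + C 3 * f) + C 2 := by
    simp only [map_ofNat]
    linear_combination X_mul_derivative_of_motzkin_eq hf
  have h := congrArg (coeff (n + 2)) h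
  simp only [map_add, coeff_C_mul, coeff_succ_X_mul, coeff_X_pow_mul, coeff_C, hg] at h
  push_cast at h
  linear_combination h

end PowerSeries

open PowerSeries in
noncomputable def motzkinSeries : ℤ⟦X⟧ := mk fun n => (motzkinNum n : ℤ)

open PowerSeries in
theorem motzkinSeries_eq :
    motzkinSeries = 1 + X * motzkinSeries + X ^ 2 * motzkinSeries ^ 2 := by
  ext (_ | _ | n)
  · simp [motzkinSeries, motzkinNum_zero]
  · simp [motzkinSeries, coeff_X_pow_mul', motzkinNum_succ 0, motzkinNum_zero]
  · rw [map_add, coeff_X_pow_mul', if_pos (by omega), sq motzkinSeries, coeff_mul,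
      Finset.Nat.sum_antidiagonal_eq_sum_range_succ_mk]
    simp [motzkinSeries, motzkinNum_succ (n + 1)]

theorem stmt_2 : ∀ n : ℕ, 2 ≤ n →
    (n + 2) * motzkinNum n =
      (2 * n + 1) * motzkinNum (n - 1) + 3 * (n - 1) * motzkinNum (n - 2) := by
  intro n hn
  obtain ⟨k, rfl⟩ := Nat.exists_eq_add_of_le' hn
  have h := PowerSeries.coeff_recurrence_of_motzkin_eq motzkinSeries_eq k
  simp only [motzkinSeries, PowerSeries.coeff_mk] at h
  simp only [Nat.add_sub_cancel, Nat.add_succ_sub_one]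
  zify
  linear_combination h
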